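/- (Jacobi-formula identity eq. (A.13) for the first Symanzik polynomial.) With the matrix data below: for all 1 ≤ i, j ≤ L one has Σ_{a,b=1}^{N} C^{bi}_{aj} · x_a · ∂_b 𝒰 = 2·δ_{ij}·𝒰, and for all 1 ≤ i ≤ L < j ≤ M one has Σ_{a,b=1}^{N} C^{bi}_{aj} · x_a · ∂_b 𝒰 = 0, as identities in the polynomial ring ℂ[x_1,…,x_N]. -/

import Mathlib

open Finset

noncomputable section

/-- Kronecker delta, valued in `ℂ`. -/
def kd {α : Type*} [DecidableEq α] (i j : α) : ℂ := if i = j then 1 else 0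

/-- Embedding of the loop indices `{1,…,L}` into `{1,…,M}`, `M = L + E`. -/
abbrev li {L : ℕ} (E : ℕ) (i : Fin L) : Fin (L + E) := Fin.castAdd E i

/-- Embedding of the external indices `{L+1,…,M}` into `{1,…,M}`. -/
abbrev xi (L : ℕ) {E : ℕ} (r : Fin E) : Fin (L + E) := Fin.natAdd L r

/-- The symmetric `L×L` matrix `Λ(x)` with entries
`Λ_{ij} = −((1+δ_{ij})/2)·Σ_a x_a·A_a^{{i,j}}`. -/
def LamMat {L E n : ℕ} (A : Fin n → Fin (L + E) → Fin (L + E) → ℂ) :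
    Matrix (Fin L) (Fin L) (MvPolynomial (Fin n) ℂ) := fun i j =>
  MvPolynomial.C (-(1 + kd i j) / 2) *
    ∑ a, MvPolynomial.C (A a (li E i) (li E j)) * MvPolynomial.X a

/-- The coefficients `C^{bi}_{aj}` of the momentum-space IBP relations:
`C^{bi}_{aj} = Σ_{m=1}^{M} A_a^{{i,m}} A^b_{{m,j}} (1+δ_{mi})` for `j ≤ L`, and
`C^{bi}_{aj} = Σ_{m=1}^{L} A_a^{{i,m}} A^b_{{m,j}} (1+δ_{mi})` for `j > L`. -/
def Cc {L E n : ℕ} (A : Fin n → Fin (L + E) → Fin (L + E) → ℂ)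
    (B : Fin (L + E) → Fin (L + E) → Fin n → ℂ)
    (b : Fin n) (i : Fin L) (a : Fin n) (j : Fin (L + E)) : ℂ :=
  if (j : ℕ) < L then
    ∑ m : Fin (L + E), A a (li E i) m * B m j b * (1 + kd m (li E i))
  else
    ∑ m ∈ univ.filter (fun m : Fin (L + E) => (m : ℕ) < L),
      A a (li E i) m * B m j b * (1 + kd m (li E i))

/-! The operator `D = Σ_{a,b} C^{bi}_{aj} x_a ∂_b` is a derivation, so Jacobi's formula gives
`D 𝒰 = tr (adj Λ · DΛ)`. As `Λ` is linear in `x`, `DΛ` is computed from the duality `B A = 1`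
on pairs with a loop index: it is `Λ E_{ij} + E_{ji} Λ` for `j ≤ L` (with `E_{ij}` the matrix
unit and `Λ` symmetric) and `0` for `j > L`. Cyclicity of the trace and
`adj Λ · Λ = Λ · adj Λ = 𝒰 · 1` then give `2 δ_{ij} 𝒰` and `0`. -/

open Matrix

namespace Derivation

section

variable {R A M : Type*} [CommSemiring R] [CommSemiring A] [AddCommMonoid M] [Algebra R A]
  [Module A M] [Module R M] (D : Derivation R A M)

theorem leibniz_finset_prod {ι : Type*} [DecidableEq ι] (s : Finset ι) (f : ι → A) :
    D (∏ i ∈ s, f i) = ∑ i ∈ s, (∏ j ∈ s.erase i, f j) • D (f i) := by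
  induction s using Finset.induction_on with
  | empty => simp
  | insert a s ha ih =>
    rw [prod_insert ha, leibniz, ih, sum_insert ha, erase_insert ha, smul_sum, add_comm]
    congr 1
    refine sum_congr rfl fun i hi => ?_
    rw [erase_insert_of_ne (ne_of_mem_of_not_mem hi ha).symm,
      prod_insert fun h => ha (mem_of_mem_erase h), mul_smul]

end

section

variable {R A : Type*} [CommRing R] [CommRing A] [Algebra R A] (D : Derivation R A A)
  {m : Type*} [Fintype m] [DecidableEq m]

theorem map_det (M : Matrix m m A) : D M.det = (M.adjugate * M.map D).trace := by
  have hcol (k : m) :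
      (M.updateCol k fun r => D (M r k)).det = ∑ l, M.adjugate k l * D (M l k) := by
    rw [← cramer_apply, cramer_eq_adjugate_mulVec]
    rfl
  have hterm (σ : Equiv.Perm m) (k : m) :
      Equiv.Perm.sign σ • ((∏ i ∈ univ.erase k, M (σ i) i) * D (M (σ k) k))
        = Equiv.Perm.sign σ • ∏ i, (M.updateCol k fun r => D (M r k)) (σ i) i := by
    rw [← mul_prod_erase univ _ (mem_univ k), updateCol_self, mul_comm]
    congr 2
    exact prod_congr rfl fun i hi => by rw [updateCol_ne (ne_of_mem_erase hi)]
  calc D M.det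
      = ∑ σ : Equiv.Perm m, ∑ k,
          Equiv.Perm.sign σ • ((∏ i ∈ univ.erase k, M (σ i) i) * D (M (σ k) k)) := by
        simp only [det_apply, map_sum, Units.smul_def, map_zsmul, leibniz_finset_prod, smul_sum,
          smul_eq_mul]
    _ = ∑ k, (M.updateCol k fun r => D (M r k)).det := by
        rw [sum_comm]
        simp only [hterm, det_apply]
    _ = (M.adjugate * M.map D).trace := by
        simp only [hcol, trace, Matrix.diag, mul_apply, map_apply]

end

end Derivation

open MvPolynomial

section IBP

variable {L E n : ℕ} (A : Fin n → Fin (L + E) → Fin (L + E) → ℂ)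
  (B : Fin (L + E) → Fin (L + E) → Fin n → ℂ)

def ibpDerivation (i : Fin L) (j : Fin (L + E)) :
    Derivation ℂ (MvPolynomial (Fin n) ℂ) (MvPolynomial (Fin n) ℂ) :=
  ∑ a, ∑ b, (C (Cc A B b i a j) * X a) • pderiv b

theorem ibpDerivation_apply (i : Fin L) (j : Fin (L + E)) (p : MvPolynomial (Fin n) ℂ) :
    ibpDerivation A B i j p = ∑ a, ∑ b, C (Cc A B b i a j) * X a * pderiv b p := by
  rw [ibpDerivation, ← Derivation.coeFnAddMonoidHom_apply]
  simp only [map_sum, Finset.sum_apply, Derivation.coeFnAddMonoidHom_apply, Derivation.smul_apply,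
    smul_eq_mul]

def lamCoeff (u v : Fin L) (a : Fin n) : ℂ := -(1 + kd u v) / 2 * A a (li E u) (li E v)

theorem LamMat_apply_eq_sum (u v : Fin L) : LamMat A u v = ∑ a, C (lamCoeff A u v a) * X a := by
  simp only [LamMat, lamCoeff, mul_sum, map_mul, mul_assoc]

theorem pderiv_LamMat (b : Fin n) (u v : Fin L) :
    pderiv b (LamMat A u v) = C (lamCoeff A u v b) := by
  simp [LamMat_apply_eq_sum, pderiv_X, Pi.single_apply]

theorem ibpDerivation_LamMat (i : Fin L) (j : Fin (L + E)) (u v : Fin L) :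
    ibpDerivation A B i j (LamMat A u v)
      = ∑ a, C (∑ b, Cc A B b i a j * lamCoeff A u v b) * X a := by
  simp only [ibpDerivation_apply, pderiv_LamMat, map_sum, map_mul, sum_mul]
  exact sum_congr rfl fun a _ => sum_congr rfl fun b _ => by ring

theorem LamMat_transpose (hA : ∀ a i j, A a i j = A a j i) : (LamMat A)ᵀ = LamMat A := by
  ext u v
  simp only [transpose_apply, LamMat, kd, eq_comm, hA _ (li E v)]

variable (hBA : ∀ i j k l : Fin (L + E), ((i : ℕ) < L ∨ (j : ℕ) < L) →
      ((k : ℕ) < L ∨ (l : ℕ) < L) →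
      ∑ a, B i j a * A a k l = if (i = k ∧ j = l) ∨ (i = l ∧ j = k) then 1 else 0)
include hBA

theorem sum_Cc_mul_lamCoeff_internal (i j u v : Fin L) (a : Fin n) :
    ∑ b, Cc A B b i a (li E j) * lamCoeff A u v b
      = (if v = j then lamCoeff A i u a else 0) + (if u = j then lamCoeff A i v a else 0) := by
  have hdual (m : Fin (L + E)) : ∑ b, B m (li E j) b * A b (li E u) (li E v)
      = if (m = li E u ∧ j = v) ∨ (m = li E v ∧ j = u) then 1 else 0 := by
    simpa using hBA m (li E j) (li E u) (li E v) (Or.inr j.isLt) (Or.inl u.isLt)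
  have hexpand : ∑ b, Cc A B b i a (li E j) * A b (li E u) (li E v)
      = ∑ m, A a (li E i) m * (1 + kd m (li E i)) *
          if (m = li E u ∧ j = v) ∨ (m = li E v ∧ j = u) then 1 else 0 := by
    simp only [Cc, Fin.val_castAdd, j.isLt, if_true, sum_mul]
    rw [sum_comm]
    refine sum_congr rfl fun m _ => ?_
    rw [← hdual, mul_sum]
    exact sum_congr rfl fun b _ => by ring
  have hfactor : ∑ b, Cc A B b i a (li E j) * lamCoeff A u v b
      = -(1 + kd u v) / 2 * ∑ b, Cc A B b i a (li E j) * A b (li E u) (li E v) := by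
    rw [mul_sum]
    exact sum_congr rfl fun b _ => by rw [lamCoeff]; ring
  rw [hfactor, hexpand]
  by_cases hv : v = j <;> by_cases hu : u = j
  · subst hv hu
    simp only [kd, ↓reduceIte, neg_add_rev, add_self_div_two, and_true, or_self, mul_ite, mul_one,
      mul_zero, sum_ite_eq', mem_univ, eq_comm, Fin.castAdd_inj, neg_mul, one_mul, lamCoeff]
    ring
  · simp only [kd, hv, hu, ↓reduceIte, add_zero, and_true, Ne.symm hu, and_false, or_false,
      mul_ite, mul_one, mul_zero, sum_ite_eq', mem_univ, eq_comm, Fin.castAdd_inj, lamCoeff,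
      neg_add_rev]
    ring
  · simp only [kd, hu, Ne.symm hv, ↓reduceIte, add_zero, and_false, and_true, false_or, mul_ite,
      mul_one, mul_zero, sum_ite_eq', mem_univ, eq_comm, Fin.castAdd_inj, lamCoeff, neg_add_rev,
      zero_add]
    ring
  · simp [kd, hu, hv, Ne.symm hu, Ne.symm hv]

theorem sum_Cc_mul_lamCoeff_external (i : Fin L) (j : Fin E) (u v : Fin L) (a : Fin n) :
    ∑ b, Cc A B b i a (xi L j) * lamCoeff A u v b = 0 := by
  simp only [Cc, Fin.val_natAdd, Nat.not_lt.mpr (Nat.le_add_right L j), if_false, sum_mul]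
  rw [sum_comm]
  refine sum_eq_zero fun m hm => ?_
  have hne (w : Fin L) : xi L j ≠ li E w := fun h => by
    have := congrArg Fin.val h
    simp only [Fin.val_natAdd, Fin.val_castAdd] at this
    omega
  have hperp : ∑ b, B m (xi L j) b * A b (li E u) (li E v) = 0 := by
    rw [hBA m (xi L j) (li E u) (li E v) (Or.inl (mem_filter.mp hm).2) (Or.inl u.isLt)]
    simp [hne]
  calc ∑ b, A a (li E i) m * B m (xi L j) b * (1 + kd m (li E i)) * lamCoeff A u v b
      = A a (li E i) m * (1 + kd m (li E i)) * (-(1 + kd u v) / 2) *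
          ∑ b, B m (xi L j) b * A b (li E u) (li E v) := by
        rw [mul_sum]
        exact sum_congr rfl fun b _ => by rw [lamCoeff]; ring
    _ = 0 := by rw [hperp, mul_zero]

theorem ibpDerivation_map_LamMat_internal (i j : Fin L) :
    (LamMat A).map (ibpDerivation A B i (li E j))
      = (LamMat A)ᵀ * single i j 1 + single j i 1 * LamMat A := by
  ext u v
  rw [map_apply, ibpDerivation_LamMat]
  simp only [sum_Cc_mul_lamCoeff_internal A B hBA, Matrix.add_apply]
  by_cases hv : v = j <;> by_cases hu : u = j
  · subst hv hu
    simp [LamMat_apply_eq_sum, sum_add_distrib, add_mul]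
  · subst hv
    simp [LamMat_apply_eq_sum, hu]
  · subst hu
    simp [LamMat_apply_eq_sum, hv]
  · simp [hu, hv]

theorem ibpDerivation_map_LamMat_external (i : Fin L) (j : Fin E) :
    (LamMat A).map (ibpDerivation A B i (xi L j)) = 0 := by
  ext u v
  simp [ibpDerivation_LamMat, sum_Cc_mul_lamCoeff_external A B hBA]

end IBP

theorem Matrix.trace_adjugate_mul_mul_single_add_single_mul {m α : Type*} [Fintype m]
    [DecidableEq m] [CommRing α] (M : Matrix m m α) (i j : m) (c : α) :
    (M.adjugate * (M * single i j c + single j i c * M)).trace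
      = 2 * (if i = j then c else 0) * M.det := by
  rw [mul_add, trace_add, ← Matrix.mul_assoc, adjugate_mul, trace_mul_comm M.adjugate,
    Matrix.mul_assoc, mul_adjugate]
  by_cases h : i = j
  · subst h
    simp only [Algebra.smul_mul_assoc, one_mul, smul_single, smul_eq_mul, trace_single_eq_same,
      Algebra.mul_smul_comm, mul_one, ↓reduceIte]
    ring
  · simp [h, Ne.symm h]

theorem stmt_9_general {L E n : ℕ}
    (A : Fin n → Fin (L + E) → Fin (L + E) → ℂ)
    (B : Fin (L + E) → Fin (L + E) → Fin n → ℂ)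
    (hAsymm : ∀ a i j, A a i j = A a j i)
    (hBA : ∀ i j k l : Fin (L + E), ((i : ℕ) < L ∨ (j : ℕ) < L) →
      ((k : ℕ) < L ∨ (l : ℕ) < L) →
      ∑ a, B i j a * A a k l = if (i = k ∧ j = l) ∨ (i = l ∧ j = k) then 1 else 0) :
    (∀ i j : Fin L,
      ∑ a, ∑ b, MvPolynomial.C (Cc A B b i a (li E j)) * MvPolynomial.X a *
          MvPolynomial.pderiv b (LamMat A).det
        = MvPolynomial.C (2 * kd i j) * (LamMat A).det) ∧
    (∀ (i : Fin L) (j : Fin E),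
      ∑ a, ∑ b, MvPolynomial.C (Cc A B b i a (xi L j)) * MvPolynomial.X a *
          MvPolynomial.pderiv b (LamMat A).det = 0) := by
  refine ⟨fun i j => ?_, fun i j => ?_⟩
  · rw [← ibpDerivation_apply, Derivation.map_det, ibpDerivation_map_LamMat_internal A B hBA,
      LamMat_transpose A hAsymm, trace_adjugate_mul_mul_single_add_single_mul]
    by_cases h : i = j <;> simp [h, kd, map_ofNat]
  · rw [← ibpDerivation_apply, Derivation.map_det, ibpDerivation_map_LamMat_external A B hBA,
      Matrix.mul_zero, trace_zero]

/-- Jacobi-formula identity (A.13) for the first Symanzik polynomial `𝒰 = det Λ(x)`: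
`Σ_{a,b} C^{bi}_{aj} x_a ∂_b 𝒰 = 2δ_{ij}·𝒰` for `i, j ≤ L`, and
`Σ_{a,b} C^{bi}_{aj} x_a ∂_b 𝒰 = 0` for `i ≤ L < j ≤ M`. -/
theorem stmt_9 {L E n : ℕ} (hL : 1 ≤ L)
    (A : Fin n → Fin (L + E) → Fin (L + E) → ℂ)
    (B : Fin (L + E) → Fin (L + E) → Fin n → ℂ)
    (hAsymm : ∀ a i j, A a i j = A a j i)
    (hBsymm : ∀ i j b, B i j b = B j i b)
    (hn : n = L * (L + 1) / 2 + L * E)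
    (hBA : ∀ i j k l : Fin (L + E), ((i : ℕ) < L ∨ (j : ℕ) < L) →
      ((k : ℕ) < L ∨ (l : ℕ) < L) →
      ∑ a, B i j a * A a k l = if (i = k ∧ j = l) ∨ (i = l ∧ j = k) then 1 else 0)
    (hAB : ∀ a b : Fin n,
      (∑ i ∈ univ.filter (fun i : Fin (L + E) => (i : ℕ) < L),
        ∑ j ∈ univ.filter (fun j : Fin (L + E) => i ≤ j), A a i j * B i j b)
        = if a = b then 1 else 0) :
    (∀ i j : Fin L,
      ∑ a, ∑ b, MvPolynomial.C (Cc A B b i a (li E j)) * MvPolynomial.X a *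
          MvPolynomial.pderiv b (LamMat A).det
        = MvPolynomial.C (2 * kd i j) * (LamMat A).det) ∧
    (∀ (i : Fin L) (j : Fin E),
      ∑ a, ∑ b, MvPolynomial.C (Cc A B b i a (xi L j)) * MvPolynomial.X a *
          MvPolynomial.pderiv b (LamMat A).det = 0) :=
  stmt_9_general A B hAsymm hBA
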